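/- Let F: R^d × R^2 → R^d satisfy the group representation condition F(v, Δx1 + Δx2) = F(F(v, Δx1), Δx2) and F(v, 0) = v. Suppose v: R^2 → R^d satisfies v(x + Δx) = F(v(x), Δx), and assume F is differentiable in its second argument at 0 with directional derivatives f_θ(v(x)) along direction θ, and that the map w ↦ f_{π/2}(w) is differentiable. Then v(x + δx) = v(x) + f_0(v(x)) δr cos θ + f_{π/2}(v(x)) δr sin θ + o(δr) for δx = (δr cos θ, δr sin θ). -/

import Mathlib

/-!
The maps `Φ p s := F p (0, s)` form a flow whose orbits are integral curves of `X := f (π / 2)`.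
A fencing argument on such a curve gives `Φ p s = p + s • X w + o(s)` uniformly for `p` near `w`,
using only the continuity of `X` at `w`; that is, `(p, s) ↦ Φ p s` is Fréchet differentiable at
`(w, 0)`. Since `F w (a, b) = Φ (F w (a, 0)) b`, the expansion of `v` along the direction `θ` is
the chain rule for `r ↦ (F w (r cos θ, 0), r sin θ)`.
-/

open Asymptotics Topology

variable {E : Type*} [NormedAddCommGroup E] [NormedSpace ℝ E]

theorem hasDerivAt_flow_of_hasDerivAt_zero {Φ : E → ℝ → E} {X : E → E}
    (hΦ : ∀ p a b, Φ p (a + b) = Φ (Φ p a) b) (hX : ∀ p, HasDerivAt (Φ p) (X p) 0)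
    (p : E) (σ : ℝ) : HasDerivAt (Φ p) (X (Φ p σ)) σ := by
  have hshift : Φ p = fun t => Φ (Φ p σ) (t - σ) := by
    ext t
    rw [← hΦ, add_sub_cancel]
  have h0 : HasDerivAt (Φ (Φ p σ)) (X (Φ p σ)) (σ - σ) := by rw [sub_self]; exact hX _
  have := h0.comp_sub_const σ σ
  rwa [← hshift] at this

theorem norm_sub_sub_smul_le_of_integralCurve {X : E → E} {g : ℝ → E} {w : E} {ε ρ s : ℝ}
    (hg : ∀ t, HasDerivAt g (X (g t)) t)
    (hX : ∀ y, dist y w < ρ → dist (X y) (X w) < ε)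
    (hε : 0 ≤ ε) (hs : dist (g 0) w + |s| * (ε + ‖X w‖) < ρ) :
    ‖g s - g 0 - s • X w‖ ≤ ε * |s| := by
  -- the fence below needs a strict bound on the derivative, which fails for `s = 0`
  rcases eq_or_ne s 0 with rfl | hs0
  · simp
  set c : ℝ → E := fun t => g (t * s) - g 0 - (t * s) • X w
  have hc : ∀ t, HasDerivAt c (s • (X (g (t * s)) - X w)) t := fun t => by
    have := ((hg (t * s)).scomp t ((hasDerivAt_id t).mul_const s)).sub_const (g 0) |>.sub
      (((hasDerivAt_id t).mul_const s).smul_const (X w))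
    rw [one_mul, ← smul_sub] at this
    exact this
  have hB : ∀ t, HasDerivAt (fun t => ε * |s| * t) (ε * |s|) t := fun t => by
    simpa using (hasDerivAt_id t).const_mul (ε * |s|)
  have hfence := image_norm_le_of_norm_deriv_right_lt_deriv_boundary
    (fun t _ => (hc t).continuousAt.continuousWithinAt) (fun t _ => (hc t).hasDerivWithinAt)
    (by simp [c]) hB ?_ (Set.right_mem_Icc.2 zero_le_one)
  · simpa [c] using hfence
  intro t ⟨ht0, ht1⟩ hct
  have hts : |t * s| ≤ |s| := by
    rw [abs_mul, abs_of_nonneg ht0]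
    exact mul_le_of_le_one_left (abs_nonneg s) ht1.le
  have hnear : dist (g (t * s)) w < ρ := calc
    dist (g (t * s)) w = ‖c t + (g 0 - w) + (t * s) • X w‖ := by
      rw [dist_eq_norm]
      congr 1
      simp only [c]
      abel
    _ ≤ ‖c t‖ + dist (g 0) w + |t * s| * ‖X w‖ := by
      rw [dist_eq_norm, ← Real.norm_eq_abs, ← norm_smul]
      exact norm_add₃_le
    _ ≤ ε * |s| + dist (g 0) w + |s| * ‖X w‖ := by
      have hc_le : ε * |s| * t ≤ ε * |s| := mul_le_of_le_one_right (by positivity) ht1.le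
      have := mul_le_mul_of_nonneg_right hts (norm_nonneg (X w))
      linarith
    _ < ρ := by linarith
  rw [norm_smul, Real.norm_eq_abs, mul_comm ε, ← dist_eq_norm]
  exact mul_lt_mul_of_pos_left (hX _ hnear) (abs_pos.2 hs0)

theorem hasFDerivAt_uncurry_flow_zero {Φ : E → ℝ → E} {X : E → E} {w : E}
    (hΦ : ∀ p σ, HasDerivAt (Φ p) (X (Φ p σ)) σ) (hΦ0 : ∀ p, Φ p 0 = p) (hX : ContinuousAt X w) :
    HasFDerivAt (fun q : E × ℝ => Φ q.1 q.2)
      (ContinuousLinearMap.fst ℝ E ℝ + (ContinuousLinearMap.snd ℝ E ℝ).smulRight (X w)) (w, 0) := by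
  rw [hasFDerivAt_iff_isLittleO, isLittleO_iff]
  intro ε hε
  obtain ⟨ρ, hρ, hXρ⟩ := Metric.continuousAt_iff.1 hX ε hε
  have hsmall : ∀ᶠ q : E × ℝ in 𝓝 (w, 0), dist q.1 w + |q.2| * (ε + ‖X w‖) < ρ := by
    have hcont : ContinuousAt (fun q : E × ℝ => dist q.1 w + |q.2| * (ε + ‖X w‖)) (w, 0) := by
      fun_prop
    exact hcont.eventually_lt continuousAt_const (by simpa using hρ)
  filter_upwards [hsmall] with q hq
  have hq' := norm_sub_sub_smul_le_of_integralCurve (hΦ q.1) (fun y hy => hXρ hy) hε.le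
    (by rwa [hΦ0])
  rw [hΦ0] at hq'
  calc ‖Φ q.1 q.2 - Φ w 0 - (ContinuousLinearMap.fst ℝ E ℝ +
        (ContinuousLinearMap.snd ℝ E ℝ).smulRight (X w)) (q - (w, 0))‖
      = ‖Φ q.1 q.2 - q.1 - q.2 • X w‖ := by
        congr 1
        simp [hΦ0]
        abel
    _ ≤ ε * |q.2| := hq'
    _ ≤ ε * ‖q - (w, 0)‖ := by
        gcongr
        have := norm_snd_le (q - (w, 0))
        rwa [Prod.snd_sub, sub_zero, Real.norm_eq_abs] at this

theorem stmt14 {d : ℕ}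
    (F : EuclideanSpace ℝ (Fin d) → ℝ × ℝ → EuclideanSpace ℝ (Fin d))
    (hgrp : ∀ w Δ1 Δ2, F w (Δ1 + Δ2) = F (F w Δ1) Δ2)
    (hid : ∀ w, F w 0 = w)
    (v : ℝ × ℝ → EuclideanSpace ℝ (Fin d))
    (hv : ∀ x Δ, v (x + Δ) = F (v x) Δ)
    (f : ℝ → EuclideanSpace ℝ (Fin d) → EuclideanSpace ℝ (Fin d))
    (hf : ∀ θ w, HasDerivAt (fun r : ℝ => F w (r * Real.cos θ, r * Real.sin θ)) (f θ w) 0)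
    (hdiff : Differentiable ℝ (f (Real.pi / 2))) :
    ∀ (x : ℝ × ℝ) (θ : ℝ),
      (fun δr : ℝ => v (x + (δr * Real.cos θ, δr * Real.sin θ)) - v x
          - δr • (Real.cos θ • f 0 (v x) + Real.sin θ • f (Real.pi / 2) (v x)))
        =o[nhds 0] (fun δr : ℝ => δr) := by
  intro x θ
  have hid' : ∀ w, F w (0, 0) = w := hid
  set Φ : EuclideanSpace ℝ (Fin d) → ℝ → EuclideanSpace ℝ (Fin d) := fun p s => F p (0, s)
  have hΦ : ∀ p a b, Φ p (a + b) = Φ (Φ p a) b := fun p a b => by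
    simp only [Φ, ← hgrp, Prod.mk_add_mk, add_zero]
  have hΦ0 : ∀ p, Φ p 0 = p := hid'
  have hΦ' : ∀ p, HasDerivAt (Φ p) (f (Real.pi / 2) p) 0 := fun p => by
    simpa using hf (Real.pi / 2) p
  have hG := hasFDerivAt_uncurry_flow_zero (hasDerivAt_flow_of_hasDerivAt_zero hΦ hΦ')
    hΦ0 (hdiff.continuous.continuousAt (x := v x))
  have hu : HasDerivAt (fun r => F (v x) (r * Real.cos θ, 0)) (Real.cos θ • f 0 (v x)) 0 := by
    have h0 : HasDerivAt (fun a => F (v x) (a, 0)) (f 0 (v x)) 0 := by simpa using hf 0 (v x)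
    simpa [Function.comp_def] using
      h0.scomp_of_eq 0 ((hasDerivAt_id (0 : ℝ)).mul_const (Real.cos θ)) (by simp)
  have hcurve := hG.comp_hasDerivAt_of_eq 0 (hu.prodMk ((hasDerivAt_id 0).mul_const (Real.sin θ)))
    (by simp [hid'])
  have hsplit : ∀ r : ℝ, v (x + (r * Real.cos θ, r * Real.sin θ)) =
      Φ (F (v x) (r * Real.cos θ, 0)) (r * Real.sin θ) := fun r => by
    simp only [Φ, hv, ← hgrp, Prod.mk_add_mk, add_zero, zero_add]
  simpa [hasDerivAt_iff_isLittleO, Function.comp_def, hsplit, hid', hΦ0] using hcurve
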